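/- Assume K < 0 and l := 2(q+δ)/(2+δ) = 2_*(η), so that α_l = n-2-κ(η). Let v be a C² solution of u'' + ((n-1)/r)u' + (η/r²)u + K r^{δ} u|u|^{q-2} = 0 on an interval (r₀,∞), positive for all sufficiently large r, such that lim_{r→∞} v(r) r^{α_l} = 0 and lim_{r→∞} v'(r) r^{α_l+1} = 0. Then there exist constants 0 < C₁ ≤ C₂ and r₁ > max(r₀,1) such that C₁ ≤ v(r) r^{n-2-κ(η)} (ln r)^{1/(q-2)} ≤ C₂ for all r > r₁. -/

import Mathlib

/-!
Put `s = √((n-2)² - 4η)`, so that `α = n - 2 - κ(η) = (n - 2 + s)/2`; criticality `l = 2_*(η)`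
means `α (q - 2) = 2 + δ`. Then `u = r^α v` and `F = r^(1-s) u'` solve the first-order system
`u' = r^(s-1) F`, `F' = -K u^(q-1) r^(-1-s)`, and the decay hypotheses say `u, F → 0`.
So `F` increases to `0`: `F ≤ 0` and `u` decreases. Comparing `F` with `c u^(q-1) r^(-s)`
for `c = -K/s`, and for `c = -K/(2s)` once `u^(q-2)` is small, gives `-F ≍ u^(q-1) r^(-s)`.
Hence `(u^(2-q))' ≍ 1/r`, i.e. `u^(2-q) ≍ log r`.
-/

open Real Filter Topology Set

noncomputable section

/-- κ(η) = ((n-2) - √((n-2)²-4η))/2. -/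
def kappa (n : ℕ) (η : ℝ) : ℝ :=
  (((n:ℝ) - 2) - Real.sqrt (((n:ℝ) - 2) ^ 2 - 4 * η)) / 2

/-- The Serrin-type exponent 2_*(η). -/
def serrinStar (n : ℕ) (η : ℝ) : ℝ :=
  2 * ((n:ℝ) + Real.sqrt (((n:ℝ) - 2) ^ 2 - 4 * η)) /
    ((n:ℝ) - 2 + Real.sqrt (((n:ℝ) - 2) ^ 2 - 4 * η))

lemma monotoneOn_Ici_of_hasDerivAt_nonneg {f f' : ℝ → ℝ} {b : ℝ}
    (hf : ∀ x ∈ Ici b, HasDerivAt f (f' x) x) (hf' : ∀ x ∈ Ioi b, 0 ≤ f' x) :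
    MonotoneOn f (Ici b) :=
  monotoneOn_of_hasDerivWithinAt_nonneg (convex_Ici b)
    (fun x hx => (hf x hx).continuousAt.continuousWithinAt)
    (fun x hx => by
      rw [interior_Ici] at hx ⊢
      exact (hf x (mem_Ici_of_Ioi hx)).hasDerivWithinAt)
    (fun x hx => hf' x (by rwa [interior_Ici] at hx))

lemma nonpos_of_hasDerivAt_nonneg_of_tendsto_zero {f f' : ℝ → ℝ} {b : ℝ}
    (hf : ∀ x ∈ Ici b, HasDerivAt f (f' x) x) (hf' : ∀ x ∈ Ioi b, 0 ≤ f' x)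
    (hlim : Tendsto f atTop (𝓝 0)) : f b ≤ 0 :=
  ge_of_tendsto hlim <| (eventually_ge_atTop b).mono fun _ hx =>
    monotoneOn_Ici_of_hasDerivAt_nonneg hf hf' self_mem_Ici hx hx

lemma nonneg_of_hasDerivAt_nonpos_of_tendsto_zero {f f' : ℝ → ℝ} {b : ℝ}
    (hf : ∀ x ∈ Ici b, HasDerivAt f (f' x) x) (hf' : ∀ x ∈ Ioi b, f' x ≤ 0)
    (hlim : Tendsto f atTop (𝓝 0)) : 0 ≤ f b := by
  have := nonpos_of_hasDerivAt_nonneg_of_tendsto_zero (f := fun x => -f x)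
    (fun x hx => (hf x hx).neg) (fun x hx => neg_nonneg.2 (hf' x hx)) (by simpa using hlim.neg)
  simpa using this

lemma eventually_mul_log_le {f f' : ℝ → ℝ} {b c c' : ℝ} (hb : 0 < b)
    (hf : ∀ x ∈ Ici b, HasDerivAt f (f' x) x) (hf' : ∀ x ∈ Ioi b, c / x ≤ f' x) (hc : c' < c) :
    ∀ᶠ x in atTop, c' * log x ≤ f x := by
  have hmono : MonotoneOn (fun x => f x - c * log x) (Ici b) :=
    monotoneOn_Ici_of_hasDerivAt_nonneg
      (fun x hx => (hf x hx).sub ((hasDerivAt_log (hb.trans_le hx).ne').const_mul c))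
      (fun x hx => by have := hf' x hx; rw [div_eq_mul_inv] at this; linarith)
  filter_upwards [eventually_ge_atTop b,
    tendsto_log_atTop.eventually_ge_atTop ((f b - c * log b) / (c' - c))] with x hx hlog
  have h1 : f b - c * log b ≤ f x - c * log x := hmono self_mem_Ici hx hx
  have h2 : (c' - c) * log x ≤ f b - c * log b := by
    rwa [div_le_iff_of_neg (by linarith), mul_comm] at hlog
  linarith

lemma eventually_le_mul_log {f f' : ℝ → ℝ} {b c c' : ℝ} (hb : 0 < b)
    (hf : ∀ x ∈ Ici b, HasDerivAt f (f' x) x) (hf' : ∀ x ∈ Ioi b, f' x ≤ c / x) (hc : c < c') :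
    ∀ᶠ x in atTop, f x ≤ c' * log x := by
  have := eventually_mul_log_le (c := -c) (c' := -c') hb (fun x hx => (hf x hx).neg)
    (fun x hx => by rw [neg_div]; exact neg_le_neg (hf' x hx)) (neg_lt_neg hc)
  filter_upwards [this] with x hx
  simp only [Pi.neg_apply, neg_mul, neg_le_neg_iff] at hx
  exact hx

lemma rpow_neg_mul_rpow_mem_Icc {A₁ A₂ L y p : ℝ} (hA₁ : 0 < A₁) (hL : 0 < L) (hp : 0 ≤ p)
    (h₁ : A₁ * L ≤ y) (h₂ : y ≤ A₂ * L) :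
    y ^ (-p) * L ^ p ∈ Icc (A₂ ^ (-p)) (A₁ ^ (-p)) := by
  have hy : 0 < y := (mul_pos hA₁ hL).trans_le h₁
  have hyL : y ^ (-p) * L ^ p = (y / L) ^ (-p) := by
    rw [div_rpow hy.le hL.le, rpow_neg hL.le, div_inv_eq_mul]
  rw [hyL]
  exact ⟨rpow_le_rpow_of_nonpos (div_pos hy hL) ((div_le_iff₀ hL).2 h₂) (neg_nonpos.2 hp),
    rpow_le_rpow_of_nonpos hA₁ ((le_div_iff₀ hL).2 h₁) (neg_nonpos.2 hp)⟩

lemma hasDerivAt_and_hasDerivAt_deriv {f : ℝ → ℝ} {S : Set ℝ} (hf : ContDiffOn ℝ 2 f S)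
    (hS : IsOpen S) {x : ℝ} (hx : x ∈ S) :
    HasDerivAt f (deriv f x) x ∧ HasDerivAt (deriv f) (deriv (deriv f) x) x :=
  ⟨((hf.differentiableOn (by norm_num)) x hx |>.differentiableAt (hS.mem_nhds hx)).hasDerivAt,
    ((hf.deriv_of_isOpen hS (m := 1) (by norm_num)).differentiableOn one_ne_zero x hx
      |>.differentiableAt (hS.mem_nhds hx)).hasDerivAt⟩

lemma critical_exponent_relations {n : ℕ} {η q δ l α s : ℝ} (hη : η < ((n:ℝ) - 2) ^ 2 / 4)
    (hq : 2 < q) (hδ : -2 < δ) (hl : l = 2 * (q + δ) / (2 + δ)) (hlcrit : l = serrinStar n η)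
    (hα : α = 2 / (l - 2)) (hs : s = √(((n:ℝ) - 2) ^ 2 - 4 * η)) :
    2 * α + 1 - s = (n:ℝ) - 1 ∧ α * (α - s) = η ∧ α * (q - 2) = 2 + δ ∧
      (n:ℝ) - 2 - kappa n η = α := by
  have hδ2 : 0 < 2 + δ := by linarith
  have hl2 : l - 2 = 2 * (q - 2) / (2 + δ) := by rw [hl]; field_simp; ring
  have hl2pos : 0 < l - 2 := by rw [hl2]; exact div_pos (by linarith) hδ2
  have hden : (n:ℝ) - 2 + s ≠ 0 := by
    intro h0
    rw [hlcrit, serrinStar, ← hs, h0, div_zero] at hl2pos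
    linarith
  have hαs : α = ((n:ℝ) - 2 + s) / 2 := by
    rw [hα, hlcrit, serrinStar, ← hs]
    field_simp
    ring
  have hs2 : s ^ 2 = ((n:ℝ) - 2) ^ 2 - 4 * η := by rw [hs]; exact sq_sqrt (by linarith)
  refine ⟨by rw [hαs]; ring, by rw [hαs]; linear_combination -hs2 / 4, ?_,
    by rw [kappa, ← hs, hαs]; ring⟩
  rw [hα, hl2]
  field_simp [(sub_pos.2 hq).ne']

/-- `flux α s v r = r ^ (1 - s) * (r ^ α * v r)'`. -/
def flux (α s : ℝ) (v : ℝ → ℝ) (r : ℝ) : ℝ :=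
  deriv v r * r ^ (α + 1 - s) + α * (v r * r ^ (α - s))

lemma hasDerivAt_mul_rpow {v : ℝ → ℝ} {α s r : ℝ} (hr : 0 < r)
    (hv : HasDerivAt v (deriv v r) r) :
    HasDerivAt (fun x => v x * x ^ α) (r ^ (s - 1) * flux α s v r) r := by
  refine (hv.mul (hasDerivAt_rpow_const (p := α) (Or.inl hr.ne'))).congr_deriv ?_
  have h₁ : r ^ (s - 1) * r ^ (α + 1 - s) = r ^ α := by rw [← rpow_add hr]; ring_nf
  have h₂ : r ^ (s - 1) * r ^ (α - s) = r ^ (α - 1) := by rw [← rpow_add hr]; ring_nf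
  unfold flux
  linear_combination -deriv v r * h₁ - α * v r * h₂

lemma hasDerivAt_flux_of_ode {v : ℝ → ℝ} {α s N η K δ q r : ℝ} (hr : 0 < r) (hvr : 0 < v r)
    (hv : HasDerivAt v (deriv v r) r) (hv' : HasDerivAt (deriv v) (deriv (deriv v) r) r)
    (hode : deriv (deriv v) r + N / r * deriv v r + η / r ^ 2 * v r +
      K * r ^ δ * v r * |v r| ^ (q - 2) = 0)
    (hN : 2 * α + 1 - s = N) (hη : α * (α - s) = η) (hδ : α * (q - 2) = 2 + δ) :
    HasDerivAt (flux α s v) (-K * (v r * r ^ α) ^ (q - 1) * r ^ (-1 - s)) r := by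
  have hd := (hv'.mul (hasDerivAt_rpow_const (p := α + 1 - s) (Or.inl hr.ne'))).add
    ((hv.mul (hasDerivAt_rpow_const (p := α - s) (Or.inl hr.ne'))).const_mul α)
  refine HasDerivAt.congr_deriv (f := flux α s v) hd ?_
  have hpow : (v r * r ^ α) ^ (q - 1) * r ^ (-1 - s) =
      v r ^ (q - 2) * v r * r ^ δ * r ^ (α - s) * r := by
    rw [mul_rpow hvr.le (rpow_nonneg hr.le _), ← rpow_mul hr.le, mul_assoc, ← rpow_add hr,
      show α * (q - 1) + (-1 - s) = δ + (α - s) + 1 by linear_combination hδ,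
      rpow_add_one hr.ne', rpow_add hr, show q - 1 = q - 2 + 1 by ring, rpow_add_one hvr.ne']
    ring
  rw [mul_assoc (-K), hpow, show α + 1 - s - 1 = α - s by ring, rpow_sub_one hr.ne',
    show α + 1 - s = α - s + 1 by ring, rpow_add_one hr.ne']
  rw [abs_of_pos hvr, ← hN, ← hη] at hode
  linear_combination (norm := skip) r ^ (α - s) * r * hode
  field_simp
  ring

lemma tendsto_flux_of_tendsto {v : ℝ → ℝ} {α s : ℝ} (hs : 0 < s)
    (hlim : Tendsto (fun r => v r * r ^ α) atTop (𝓝 0))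
    (hlim' : Tendsto (fun r => deriv v r * r ^ (α + 1)) atTop (𝓝 0)) :
    Tendsto (flux α s v) atTop (𝓝 0) := by
  have := (hlim'.add (hlim.const_mul α)).mul (tendsto_rpow_neg_atTop hs)
  rw [show ((0:ℝ) + α * 0) * 0 = 0 by ring] at this
  refine this.congr' ((eventually_gt_atTop 0).mono fun r hr => ?_)
  simp only [flux, sub_eq_add_neg _ s, rpow_add hr]
  ring

structure IsDecayingFowlerSolution (u F : ℝ → ℝ) (a s q B : ℝ) : Prop where
  nonneg : 0 ≤ a
  pos : ∀ x ∈ Ioi a, 0 < u x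
  hasDerivAt_u : ∀ x ∈ Ioi a, HasDerivAt u (x ^ (s - 1) * F x) x
  hasDerivAt_flux : ∀ x ∈ Ioi a, HasDerivAt F (B * u x ^ (q - 1) * x ^ (-1 - s)) x
  tendsto_u : Tendsto u atTop (𝓝 0)
  tendsto_flux : Tendsto F atTop (𝓝 0)

namespace IsDecayingFowlerSolution

variable {u F : ℝ → ℝ} {a s q B : ℝ}

lemma pos_of_mem (h : IsDecayingFowlerSolution u F a s q B) {x : ℝ} (hx : x ∈ Ioi a) :
    0 < x :=
  h.nonneg.trans_lt hx

lemma tendsto_rpow (h : IsDecayingFowlerSolution u F a s q B) {p : ℝ} (hp : 0 < p) :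
    Tendsto (fun x => u x ^ p) atTop (𝓝 0) := by
  simpa [zero_rpow hp.ne'] using h.tendsto_u.rpow_const (Or.inr hp.le)

lemma flux_nonpos (h : IsDecayingFowlerSolution u F a s q B) (hB : 0 < B) {x : ℝ}
    (hx : x ∈ Ioi a) : F x ≤ 0 := by
  refine nonpos_of_hasDerivAt_nonneg_of_tendsto_zero
    (fun y hy => h.hasDerivAt_flux y (hx.out.trans_le hy)) (fun y hy => ?_) h.tendsto_flux
  have hy' : y ∈ Ioi a := hx.out.trans hy
  have := h.pos y hy'
  have := h.pos_of_mem hy'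
  positivity

lemma antitoneOn (h : IsDecayingFowlerSolution u F a s q B) (hB : 0 < B) :
    AntitoneOn u (Ioi a) :=
  antitoneOn_of_hasDerivWithinAt_nonpos (convex_Ioi a)
    (fun x hx => (h.hasDerivAt_u x hx).continuousAt.continuousWithinAt)
    (fun x hx => by
      rw [interior_Ioi] at hx ⊢
      exact (h.hasDerivAt_u x hx).hasDerivWithinAt)
    (fun x hx => by
      rw [interior_Ioi] at hx
      exact mul_nonpos_of_nonneg_of_nonpos (rpow_nonneg (h.pos_of_mem hx).le _)
        (h.flux_nonpos hB hx))

lemma neg_flux_le (h : IsDecayingFowlerSolution u F a s q B) (hs : 0 < s) (hq : 1 ≤ q)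
    (hB : 0 < B) {r : ℝ} (hr : r ∈ Ioi a) : -F r ≤ B / s * u r ^ (q - 1) * r ^ (-s) := by
  -- `F + c x^(-s)` with `c = B/s u(r)^(q-1)` decreases on `[r, ∞)` because `u` does.
  set c := B / s * u r ^ (q - 1)
  have hmem {x : ℝ} (hx : x ∈ Ici r) : x ∈ Ioi a := hr.out.trans_le hx
  have hlim : Tendsto (fun x => F x + c * x ^ (-s)) atTop (𝓝 0) := by
    simpa using h.tendsto_flux.add ((tendsto_rpow_neg_atTop hs).const_mul c)
  suffices hderiv : ∀ x ∈ Ioi r,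
      B * u x ^ (q - 1) * x ^ (-1 - s) + c * (-s * x ^ (-s - 1)) ≤ 0 by
    have := nonneg_of_hasDerivAt_nonpos_of_tendsto_zero (f := fun x => F x + c * x ^ (-s))
      (fun x hx => (h.hasDerivAt_flux x (hmem hx)).add
        ((hasDerivAt_rpow_const (Or.inl (h.pos_of_mem (hmem hx)).ne')).const_mul c))
      hderiv hlim
    linarith
  intro x hx
  have hx' := hmem (mem_Ici_of_Ioi hx)
  have hux : u x ^ (q - 1) ≤ u r ^ (q - 1) :=
    rpow_le_rpow (h.pos x hx').le (h.antitoneOn hB hr hx' hx.out.le) (by linarith)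
  have hcs : c * s = B * u r ^ (q - 1) := by
    simp only [c]
    field_simp
  have hc : c * (-s * x ^ (-s - 1)) = -(B * u r ^ (q - 1) * x ^ (-1 - s)) := by
    rw [show -s - 1 = -1 - s by ring]
    linear_combination (-x ^ (-1 - s)) * hcs
  rw [hc]
  have := mul_le_mul_of_nonneg_right (mul_le_mul_of_nonneg_left hux hB.le)
    (rpow_pos_of_pos (h.pos_of_mem hx') (-1 - s)).le
  linarith

lemma eventually_le_neg_flux (h : IsDecayingFowlerSolution u F a s q B) (hs : 0 < s)
    (hq : 2 < q) (hB : 0 < B) :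
    ∀ᶠ r in atTop, B / (2 * s) * u r ^ (q - 1) * r ^ (-s) ≤ -F r := by
  have hq1 : 0 < q - 1 := by linarith
  obtain ⟨b, hb⟩ := eventually_atTop.1 ((h.tendsto_rpow (sub_pos.2 hq)).eventually
    (ge_mem_nhds (show 0 < s ^ 2 / (B * (q - 1)) by positivity)))
  refine eventually_atTop.2 ⟨max b (a + 1), fun r hr => ?_⟩
  have hmem {x : ℝ} (hx : x ∈ Ici r) : x ∈ Ioi a := by
    have := le_max_right b (a + 1)
    exact show a < x by linarith [hx.out]
  -- `F + B/(2s) u^(q-1) x^(-s)` increases on `[r, ∞)`, where `u^(q-2) ≤ s²/(B(q-1))`.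
  have hlim : Tendsto (fun x => F x + B / (2 * s) * (u x ^ (q - 1) * x ^ (-s))) atTop (𝓝 0) := by
    simpa using h.tendsto_flux.add
      (((h.tendsto_rpow hq1).mul (tendsto_rpow_neg_atTop hs)).const_mul (B / (2 * s)))
  suffices hderiv : ∀ x ∈ Ioi r, 0 ≤ B * u x ^ (q - 1) * x ^ (-1 - s) + B / (2 * s) *
      (x ^ (s - 1) * F x * (q - 1) * u x ^ (q - 1 - 1) * x ^ (-s) +
        u x ^ (q - 1) * (-s * x ^ (-s - 1))) by
    have := nonpos_of_hasDerivAt_nonneg_of_tendsto_zero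
      (f := fun x => F x + B / (2 * s) * (u x ^ (q - 1) * x ^ (-s)))
      (fun x hx => (h.hasDerivAt_flux x (hmem hx)).add
        ((((h.hasDerivAt_u x (hmem hx)).rpow_const (Or.inl (h.pos x (hmem hx)).ne')).mul
          (hasDerivAt_rpow_const (Or.inl (h.pos_of_mem (hmem hx)).ne'))).const_mul _))
      hderiv hlim
    linarith
  intro x hx
  have hx' := hmem (mem_Ici_of_Ioi hx)
  have hx0 := h.pos_of_mem hx'
  have hy := h.pos x hx'
  have hF := h.neg_flux_le hs (by linarith) hB hx'
  have hsmall : u x ^ (q - 2) ≤ s ^ 2 / (B * (q - 1)) :=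
    hb x ((le_max_left _ _).trans (hr.trans hx.out.le))
  have e1 : x ^ (s - 1) = (x ^ (-s))⁻¹ * x⁻¹ := by
    rw [rpow_neg hx0.le, inv_inv, rpow_sub_one hx0.ne', div_eq_mul_inv]
  have e2 : x ^ (-1 - s) = x ^ (-s) * x⁻¹ := by
    rw [show -1 - s = -s - 1 by ring, rpow_sub_one hx0.ne', div_eq_mul_inv]
  have e3 : x ^ (-s - 1) = x ^ (-s) * x⁻¹ := by rw [rpow_sub_one hx0.ne', div_eq_mul_inv]
  have e4 : u x ^ (q - 1) = u x ^ (q - 2) * u x := by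
    rw [show q - 1 = q - 2 + 1 by ring, rpow_add_one hy.ne']
  rw [e4] at hF
  rw [e1, e2, e3, e4, show q - 1 - 1 = q - 2 by ring]
  have hP : 0 < x ^ (-s) := rpow_pos_of_pos hx0 _
  have hm : 0 < u x ^ (q - 2) := rpow_pos_of_pos hy _
  set P := x ^ (-s)
  set m := u x ^ (q - 2)
  have key : B * (m * u x) * (P * x⁻¹) + B / (2 * s) * ((P⁻¹ * x⁻¹) * F x * (q - 1) * m * P +
      m * u x * (-s * (P * x⁻¹))) = B * m * u x * P * x⁻¹ / 2 * (1 - B * (q - 1) * m / s ^ 2) +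
      B * (q - 1) / (2 * s) * m * x⁻¹ * (F x + B / s * (m * u x) * P) := by
    field_simp
    ring
  rw [key]
  refine add_nonneg (mul_nonneg (by positivity) (sub_nonneg.2 ?_))
    (mul_nonneg (by positivity) (by linarith))
  rw [le_div_iff₀ (by positivity)] at hsmall
  rw [div_le_one (by positivity)]
  linarith

lemma eventually_mul_log_le_rpow_le_mul_log (h : IsDecayingFowlerSolution u F a s q B) (hs : 0 < s)
    (hq : 2 < q) (hB : 0 < B) :
    ∀ᶠ x in atTop, (q - 2) * B / (4 * s) * log x ≤ u x ^ (-(q - 2)) ∧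
      u x ^ (-(q - 2)) ≤ ((q - 2) * B / s + 1) * log x := by
  obtain ⟨b, hb⟩ := eventually_atTop.1 (h.eventually_le_neg_flux hs hq hB)
  set b' := max b (a + 1)
  have hmem {x : ℝ} (hx : x ∈ Ici b') : x ∈ Ioi a := by
    have := le_max_right b (a + 1)
    exact show a < x by linarith [hx.out]
  have hd (x : ℝ) (hx : x ∈ Ici b') := (h.hasDerivAt_u x (hmem hx)).rpow_const
    (p := -(q - 2)) (Or.inl (h.pos x (hmem hx)).ne')
  have hbounds (x : ℝ) (hx : x ∈ Ioi b') :
      (q - 2) * B / (2 * s) / x ≤ x ^ (s - 1) * F x * -(q - 2) * u x ^ (-(q - 2) - 1) ∧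
      x ^ (s - 1) * F x * -(q - 2) * u x ^ (-(q - 2) - 1) ≤ (q - 2) * B / s / x := by
    have hx' := hmem (mem_Ici_of_Ioi hx)
    have hx0 := h.pos_of_mem hx'
    have hy := h.pos x hx'
    have hlo := hb x ((le_max_left _ _).trans hx.out.le)
    have hup := h.neg_flux_le hs (by linarith) hB hx'
    have e1 : u x ^ (-(q - 2) - 1) * u x ^ (q - 1) = 1 := by
      rw [← rpow_add hy, show -(q - 2) - 1 + (q - 1) = 0 by ring, rpow_zero]
    have e2 : x ^ (s - 1) * x ^ (-s) = x⁻¹ := by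
      rw [← rpow_add hx0, show s - 1 + -s = -1 by ring, rpow_neg_one]
    have hM : 0 ≤ (q - 2) * u x ^ (-(q - 2) - 1) * x ^ (s - 1) := by
      have := rpow_pos_of_pos hy (-(q - 2) - 1)
      have := rpow_pos_of_pos hx0 (s - 1)
      have : 0 < q - 2 := by linarith
      positivity
    have hM' (c : ℝ) : (q - 2) * u x ^ (-(q - 2) - 1) * x ^ (s - 1) *
        (c * u x ^ (q - 1) * x ^ (-s)) = (q - 2) * c / x := by
      linear_combination ((q - 2) * c * x ^ (s - 1) * x ^ (-s)) * e1 + ((q - 2) * c) * e2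
    have hφ' : x ^ (s - 1) * F x * -(q - 2) * u x ^ (-(q - 2) - 1) =
        (q - 2) * u x ^ (-(q - 2) - 1) * x ^ (s - 1) * -F x := by ring
    rw [hφ']
    constructor
    · calc (q - 2) * B / (2 * s) / x
          = (q - 2) * u x ^ (-(q - 2) - 1) * x ^ (s - 1) *
            (B / (2 * s) * u x ^ (q - 1) * x ^ (-s)) := by rw [hM']; ring
        _ ≤ _ := mul_le_mul_of_nonneg_left hlo hM
    · calc _ ≤ (q - 2) * u x ^ (-(q - 2) - 1) * x ^ (s - 1) *
            (B / s * u x ^ (q - 1) * x ^ (-s)) := mul_le_mul_of_nonneg_left hup hM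
        _ = (q - 2) * B / s / x := by rw [hM']; ring
  have hb'0 : 0 < b' := h.nonneg.trans_lt (hmem self_mem_Ici)
  have hc : 0 < (q - 2) * B / (4 * s) := by
    have : 0 < q - 2 := by linarith
    positivity
  exact (eventually_mul_log_le hb'0 hd (fun x hx => (hbounds x hx).1)
    (by linarith [show (q - 2) * B / (4 * s) = (q - 2) * B / (2 * s) / 2 by ring])).and
    (eventually_le_mul_log hb'0 hd (fun x hx => (hbounds x hx).2) (lt_add_one _))

theorem exists_bounds_mul_log_rpow (h : IsDecayingFowlerSolution u F a s q B) (hs : 0 < s)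
    (hq : 2 < q) (hB : 0 < B) :
    ∃ C₁ C₂ : ℝ, 0 < C₁ ∧ C₁ ≤ C₂ ∧ ∀ᶠ r in atTop,
      C₁ ≤ u r * log r ^ (1 / (q - 2)) ∧ u r * log r ^ (1 / (q - 2)) ≤ C₂ := by
  have hq2 : 0 < q - 2 := by linarith
  have hA₂ : 0 < (q - 2) * B / s + 1 := by positivity
  have hev : ∀ᶠ r in atTop,
      ((q - 2) * B / s + 1) ^ (-(1 / (q - 2))) ≤ u r * log r ^ (1 / (q - 2)) ∧
      u r * log r ^ (1 / (q - 2)) ≤ ((q - 2) * B / (4 * s)) ^ (-(1 / (q - 2))) := by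
    filter_upwards [h.eventually_mul_log_le_rpow_le_mul_log hs hq hB, eventually_gt_atTop (max a 1)]
      with r ⟨h₁, h₂⟩ hr
    have hy := h.pos r (lt_of_le_of_lt (le_max_left a 1) hr)
    have hu : u r = (u r ^ (-(q - 2))) ^ (-(1 / (q - 2))) := by
      rw [← rpow_mul hy.le, neg_mul_neg, mul_one_div_cancel hq2.ne', rpow_one]
    rw [hu]
    exact rpow_neg_mul_rpow_mem_Icc (by positivity)
      (log_pos (lt_of_le_of_lt (le_max_right a 1) hr)) (by positivity) h₁ h₂
  obtain ⟨r, hr⟩ := hev.exists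
  exact ⟨_, _, rpow_pos_of_pos hA₂ _, hr.1.trans hr.2, hev⟩

end IsDecayingFowlerSolution

theorem stmt19_general (n : ℕ) (η K q δ l α : ℝ)
    (hη : η < ((n:ℝ) - 2) ^ 2 / 4) (hK : K < 0)
    (hq : 2 < q) (hδ : -2 < δ)
    (hl : l = 2 * (q + δ) / (2 + δ)) (hlcrit : l = serrinStar n η)
    (hα : α = 2 / (l - 2))
    (r₀ : ℝ) (v : ℝ → ℝ)
    (hv : ContDiffOn ℝ 2 v (Ioi r₀))
    (heq : ∀ r ∈ Ioi r₀,
      deriv (deriv v) r + ((n:ℝ) - 1) / r * deriv v r + η / r ^ 2 * v r +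
        K * r ^ δ * v r * |v r| ^ (q - 2) = 0)
    (hpos : ∀ᶠ r in atTop, 0 < v r)
    (hlim : Tendsto (fun r => v r * r ^ α) atTop (𝓝 0))
    (hlim' : Tendsto (fun r => deriv v r * r ^ (α + 1)) atTop (𝓝 0)) :
    ∃ C₁ C₂ : ℝ, 0 < C₁ ∧ C₁ ≤ C₂ ∧
      ∃ r₁ : ℝ, max r₀ 1 < r₁ ∧
        ∀ r : ℝ, r₁ < r →
          C₁ ≤ v r * r ^ ((n:ℝ) - 2 - kappa n η) * (Real.log r) ^ (1 / (q - 2)) ∧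
          v r * r ^ ((n:ℝ) - 2 - kappa n η) * (Real.log r) ^ (1 / (q - 2)) ≤ C₂ := by
  set s := √(((n:ℝ) - 2) ^ 2 - 4 * η) with hs_def
  have hs : 0 < s := sqrt_pos.2 (by linarith)
  obtain ⟨hN, hηα, hδα, hκ⟩ := critical_exponent_relations hη hq hδ hl hlcrit hα hs_def
  obtain ⟨R, hR⟩ := eventually_atTop.1 hpos
  have hsol : IsDecayingFowlerSolution (fun x => v x * x ^ α) (flux α s v)
      (max (max r₀ 1) R) s q (-K) := by
    have hmem {x : ℝ} (hx : x ∈ Ioi (max (max r₀ 1) R)) : 0 < x ∧ 0 < v x ∧ x ∈ Ioi r₀ := by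
      simp only [mem_Ioi, max_lt_iff] at hx
      exact ⟨by linarith, hR x hx.2.le, hx.1.1⟩
    have hder {x : ℝ} (hx : x ∈ Ioi (max (max r₀ 1) R)) :=
      hasDerivAt_and_hasDerivAt_deriv hv isOpen_Ioi (hmem hx).2.2
    refine ⟨by positivity, fun x hx => mul_pos (hmem hx).2.1 (rpow_pos_of_pos (hmem hx).1 _),
      fun x hx => hasDerivAt_mul_rpow (hmem hx).1 (hder hx).1, fun x hx => ?_, hlim,
      tendsto_flux_of_tendsto hs hlim hlim'⟩
    simpa using hasDerivAt_flux_of_ode (hmem hx).1 (hmem hx).2.1 (hder hx).1 (hder hx).2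
      (heq x (hmem hx).2.2) hN hηα hδα
  obtain ⟨C₁, C₂, hC₁, hC₁₂, hev⟩ := hsol.exists_bounds_mul_log_rpow hs hq (neg_pos.2 hK)
  obtain ⟨r₁, hr₁⟩ := eventually_atTop.1 hev
  refine ⟨C₁, C₂, hC₁, hC₁₂, max r₁ (max r₀ 1 + 1), by simp, fun r hr => ?_⟩
  rw [hκ]
  exact hr₁ r ((le_max_left _ _).trans hr.le)

theorem stmt19 (n : ℕ) (hn : 2 < n) (η K q δ l α : ℝ)
    (hη : η < ((n:ℝ) - 2) ^ 2 / 4) (hK : K < 0)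
    (hq : 2 < q) (hδ : -2 < δ)
    (hl : l = 2 * (q + δ) / (2 + δ)) (hlcrit : l = serrinStar n η)
    (hα : α = 2 / (l - 2))
    (r₀ : ℝ) (hr₀ : 0 < r₀) (v : ℝ → ℝ)
    (hv : ContDiffOn ℝ 2 v (Ioi r₀))
    (heq : ∀ r ∈ Ioi r₀,
      deriv (deriv v) r + ((n:ℝ) - 1) / r * deriv v r + η / r ^ 2 * v r +
        K * r ^ δ * v r * |v r| ^ (q - 2) = 0)
    (hpos : ∀ᶠ r in atTop, 0 < v r)
    (hlim : Tendsto (fun r => v r * r ^ α) atTop (𝓝 0))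
    (hlim' : Tendsto (fun r => deriv v r * r ^ (α + 1)) atTop (𝓝 0)) :
    ∃ C₁ C₂ : ℝ, 0 < C₁ ∧ C₁ ≤ C₂ ∧
      ∃ r₁ : ℝ, max r₀ 1 < r₁ ∧
        ∀ r : ℝ, r₁ < r →
          C₁ ≤ v r * r ^ ((n:ℝ) - 2 - kappa n η) * (Real.log r) ^ (1 / (q - 2)) ∧
          v r * r ^ ((n:ℝ) - 2 - kappa n η) * (Real.log r) ^ (1 / (q - 2)) ≤ C₂ :=
  stmt19_general n η K q δ l α hη hK hq hδ hl hlcrit hα r₀ v hv heq hpos hlim hlim'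

end
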